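/- Under the assumptions of the period-2 problem with state s=1, the set of maximizers of p' ↦ H·𝟙{p' ≥ 1/2} - c(p' - p) contains p itself when p ≥ 1/2 or p < 1/2 - Δ, and contains 1/2 when 1/2 - Δ < p < 1/2; moreover any maximizer p' satisfies |p' - 1/2| ≤ |p - 1/2|. -/

import Mathlib

/-!
An even cost that is strictly increasing on `[0, ∞)` vanishes only at `0` and grows with the
distance moved. Hence moving the policy pays only if it crosses the threshold `1/2`, and then
only exactly onto it: the elite either stays at `p` or moves to `1/2`, and it moves precisely
when the distance `1/2 - p` to the threshold is less than `Δ`, the distance whose cost equals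
the prize `H`.
-/

open Set

namespace Function.Even

variable {c : ℝ → ℝ}

theorem apply_abs (hc : c.Even) (x : ℝ) : c |x| = c x := by
  rcases abs_choice x with h | h <;> rw [h]
  exact hc x

variable (hc : c.Even) (hmono : StrictMonoOn c (Ici 0)) (hc0 : c 0 = 0)
include hc hmono hc0

theorem apply_pos {x : ℝ} (hx : x ≠ 0) : 0 < c x := by
  simpa only [hc.apply_abs, abs_zero, hc0] using
    hmono (mem_Ici.mpr le_rfl) (abs_nonneg x) (abs_pos.mpr hx)

theorem apply_nonneg (x : ℝ) : 0 ≤ c x := by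
  rcases eq_or_ne x 0 with rfl | hx
  exacts [hc0.ge, (hc.apply_pos hmono hc0 hx).le]

theorem eq_zero_of_apply_nonpos {x : ℝ} (h : c x ≤ 0) : x = 0 := by
  by_contra hx
  exact (hc.apply_pos hmono hc0 hx).not_ge h

end Function.Even

/-- The elite's period-2 payoff from moving the policy from `p` to `q`. -/
noncomputable def period2Payoff (c : ℝ → ℝ) (H p q : ℝ) : ℝ :=
  (if 1 / 2 ≤ q then H else 0) - c (q - p)

section Period2Payoff

variable {c : ℝ → ℝ} {H Δ p q : ℝ} (hc : c.Even) (hmono : StrictMonoOn c (Ici 0))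
  (hc0 : c 0 = 0)
include hc hmono hc0

theorem isMaxOn_period2Payoff_self_of_half_le (hH : 0 ≤ H) (hp : 1 / 2 ≤ p) (s : Set ℝ) :
    IsMaxOn (period2Payoff c H p) s p := isMaxOn_iff.mpr fun q _ => by
  have := hc.apply_nonneg hmono hc0 (q - p)
  simp only [period2Payoff, if_pos hp, sub_self, hc0]
  split_ifs <;> linarith

theorem isMaxOn_period2Payoff_self_of_lt_half_sub (hΔ : 0 < Δ) (hcΔ : c Δ = H)
    (hp : p < 1 / 2 - Δ) (s : Set ℝ) : IsMaxOn (period2Payoff c H p) s p :=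
  isMaxOn_iff.mpr fun q _ => by
    simp only [period2Payoff, if_neg (show ¬ 1 / 2 ≤ p by linarith), sub_self, hc0]
    split_ifs with hq
    · have : c Δ < c (q - p) := hmono hΔ.le (by linarith : (0 : ℝ) ≤ q - p) (by linarith)
      linarith
    · linarith [hc.apply_nonneg hmono hc0 (q - p)]

theorem isMaxOn_period2Payoff_half (hcΔ : c Δ = H) (hp₁ : 1 / 2 - Δ < p) (hp₂ : p < 1 / 2)
    (s : Set ℝ) : IsMaxOn (period2Payoff c H p) s (1 / 2) :=
  isMaxOn_iff.mpr fun q _ => by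
    have hp₀ : (0 : ℝ) ≤ 1 / 2 - p := by linarith
    simp only [period2Payoff, le_refl, if_true]
    split_ifs with hq
    · have : c (1 / 2 - p) ≤ c (q - p) :=
        hmono.monotoneOn hp₀ (by linarith : (0 : ℝ) ≤ q - p) (by linarith)
      linarith
    · have : c (1 / 2 - p) < c Δ := hmono hp₀ (by linarith : (0 : ℝ) ≤ Δ) (by linarith)
      linarith [hc.apply_nonneg hmono hc0 (q - p)]

theorem eq_or_eq_half_of_isMaxOn_period2Payoff (hH : 0 ≤ H) {s : Set ℝ} (hps : p ∈ s)
    (hs : 1 / 2 ∈ s) (hq : IsMaxOn (period2Payoff c H p) s q) : q = p ∨ q = 1 / 2 := by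
  have hstay : period2Payoff c H p p ≤ period2Payoff c H p q := hq hps
  have hhalf : period2Payoff c H p (1 / 2) ≤ period2Payoff c H p q := hq hs
  simp only [period2Payoff, sub_self, hc0, sub_zero, le_refl, if_true] at hstay hhalf
  by_cases hq2 : 1 / 2 ≤ q
  · rw [if_pos hq2] at hstay hhalf
    by_cases hp2 : 1 / 2 ≤ p
    · rw [if_pos hp2] at hstay
      exact .inl <| sub_eq_zero.mp <| hc.eq_zero_of_apply_nonpos hmono hc0 (by linarith)
    · have hqp : (0 : ℝ) ≤ q - p := by linarith
      have : q - p ≤ 1 / 2 - p := (hmono.le_iff_le hqp (by linarith : (0 : ℝ) ≤ 1 / 2 - p)).mp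
        (by linarith)
      exact .inr (by linarith)
  · rw [if_neg hq2] at hstay
    have : 0 ≤ if 1 / 2 ≤ p then H else 0 := by split_ifs <;> simp [hH]
    exact .inl <| sub_eq_zero.mp <| hc.eq_zero_of_apply_nonpos hmono hc0 (by linarith)

end Period2Payoff

theorem period2_maximizers
    (c : ℝ → ℝ) (H Δ : ℝ)
    (hc0 : c 0 = 0)
    (hceven : ∀ x, c (-x) = c x)
    (hcmono : StrictMonoOn c (Set.Ici (0 : ℝ)))
    (hH : 0 < H) (hΔ : 0 < Δ) (hcΔ : c Δ = H)
    (p : ℝ) (hp : p ∈ Set.Icc (0 : ℝ) 1) :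
    ((1 / 2 ≤ p ∨ p < 1 / 2 - Δ →
        IsMaxOn (fun p' => (if (1 : ℝ) / 2 ≤ p' then H else 0) - c (p' - p))
          (Set.Icc (0 : ℝ) 1) p) ∧
     (1 / 2 - Δ < p → p < 1 / 2 →
        IsMaxOn (fun p' => (if (1 : ℝ) / 2 ≤ p' then H else 0) - c (p' - p))
          (Set.Icc (0 : ℝ) 1) (1 / 2)) ∧
     (∀ p' ∈ Set.Icc (0 : ℝ) 1,
        IsMaxOn (fun q => (if (1 : ℝ) / 2 ≤ q then H else 0) - c (q - p))
          (Set.Icc (0 : ℝ) 1) p' →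
        |p' - 1 / 2| ≤ |p - 1 / 2|)) := by
  have hc : c.Even := hceven
  refine ⟨?_, ?_, ?_⟩
  · rintro (hp2 | hp2)
    · exact isMaxOn_period2Payoff_self_of_half_le hc hcmono hc0 hH.le hp2 _
    · exact isMaxOn_period2Payoff_self_of_lt_half_sub hc hcmono hc0 hΔ hcΔ hp2 _
  · exact fun hp₁ hp₂ => isMaxOn_period2Payoff_half hc hcmono hc0 hcΔ hp₁ hp₂ _
  · intro q _ hq
    have hhalf : (1 / 2 : ℝ) ∈ Icc 0 1 := by norm_num
    obtain rfl | rfl := eq_or_eq_half_of_isMaxOn_period2Payoff hc hcmono hc0 hH.le hp hhalf hq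
    · exact le_rfl
    · simp
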